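/- With G, C1, C2, α_1, α_2 as in the context (in particular G has no universal vertex), if α_1 = α_2 = 1 and |C1| ≥ 3 and |C2| ≥ 3, then G has a 3-tuple dominating set and γ×3(G) = 6. -/

import Mathlib

open Set

/-- The closed neighborhood `N[v]` of a vertex `v`: `v` together with its neighbors. -/
def closedNbhd {V : Type*} (G : SimpleGraph V) (v : V) : Set V :=
  insert v {w | G.Adj v w}

/-- `D` is a `k`-tuple dominating set of `G`: every vertex has at least `k` members of `D`
in its closed neighborhood. -/
def IsKTupleDomSet {V : Type*} (G : SimpleGraph V) (k : ℕ) (D : Set V) : Prop :=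
  ∀ v : V, k ≤ (closedNbhd G v ∩ D).ncard

/-- `γ×k(G)`: the minimum cardinality of a `k`-tuple dominating set of `G`. -/
noncomputable def gammaTuple {V : Type*} (G : SimpleGraph V) (k : ℕ) : ℕ :=
  sInf {n | ∃ D : Set V, IsKTupleDomSet G k D ∧ D.ncard = n}

/-- A vertex is universal if its closed neighborhood is the whole vertex set. -/
def IsUniversalVertex {V : Type*} (G : SimpleGraph V) (u : V) : Prop :=
  closedNbhd G u = Set.univ

/-- The non-neighbor set `N̄(v) = V \ N[v]`. -/
def nonNbhd {V : Type*} (G : SimpleGraph V) (v : V) : Set V :=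
  (closedNbhd G v)ᶜ

/-- `S` is a stable set of the auxiliary interval graph `H_i`: the non-neighbor sets of the
vertices of `S` are pairwise disjoint. -/
def IsC0PStable {V : Type*} (G : SimpleGraph V) (S : Set V) : Prop :=
  S.Pairwise fun u w => Disjoint (nonNbhd G u) (nonNbhd G w)

/-!
Since `α₁ = 1`, the non-neighbor intervals `N̄(v)`, `v ∈ C₁`, pairwise meet, so by Helly's theorem
on a line they share a vertex `y`. Then `N[y] ⊆ C₂`, so a 3-tuple dominating set has at least three
vertices in `C₂`, and symmetrically at least three in `C₁`. Three vertices from each clique suffice.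
-/

/-- Helly's theorem in dimension one. -/
theorem Set.OrdConnected.nonempty_iInter_of_pairwise_not_disjoint {α ι : Type*} [LinearOrder α]
    [Finite ι] [Nonempty ι] {s : ι → Set α} (hconn : ∀ i, (s i).OrdConnected)
    (hfin : ∀ i, (s i).Finite) (hne : ∀ i, (s i).Nonempty)
    (hpair : Pairwise fun i j => ¬ Disjoint (s i) (s j)) : (⋂ i, s i).Nonempty := by
  choose m hm hle_m using fun i => (s i).exists_max_image id (hfin i) (hne i)
  -- the smallest of the right endpoints lies in every interval
  obtain ⟨i₀, hi₀⟩ := Finite.exists_min m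
  refine ⟨m i₀, Set.mem_iInter.2 fun i => ?_⟩
  rcases eq_or_ne i i₀ with rfl | hi
  · exact hm i
  obtain ⟨z, hzi, hzi₀⟩ := Set.not_disjoint_iff.1 (hpair hi)
  exact (hconn i).out hzi (hm i) ⟨hle_m i₀ z hzi₀, hi₀ i⟩

section Graph

variable {V : Type*} {G : SimpleGraph V}

lemma mem_closedNbhd_comm {v w : V} : w ∈ closedNbhd G v ↔ v ∈ closedNbhd G w := by
  simp only [closedNbhd, Set.mem_insert_iff, Set.mem_ofPred_eq, eq_comm (a := w), G.adj_comm]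

lemma SimpleGraph.IsClique.subset_closedNbhd {C : Set V} (hC : G.IsClique C) {v : V}
    (hv : v ∈ C) : C ⊆ closedNbhd G v := by
  intro w hw
  rcases eq_or_ne w v with rfl | hne
  · exact Set.mem_insert _ _
  · exact Set.mem_insert_of_mem _ (hC hv hw hne.symm)

lemma SimpleGraph.IsClique.nonNbhd_subset_compl {C : Set V} (hC : G.IsClique C) {v : V}
    (hv : v ∈ C) : nonNbhd G v ⊆ Cᶜ :=
  Set.compl_subset_compl.2 (hC.subset_closedNbhd hv)

lemma closedNbhd_subset_compl_of_forall_mem_nonNbhd {C : Set V} {y : V}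
    (hy : ∀ v ∈ C, y ∈ nonNbhd G v) : closedNbhd G y ⊆ Cᶜ :=
  fun w hw hwC => hy w hwC (mem_closedNbhd_comm.1 hw)

lemma not_disjoint_nonNbhd_of_one_mem_upperBounds {C : Set V}
    (hα : 1 ∈ upperBounds {n | ∃ S : Set V, S ⊆ C ∧ IsC0PStable G S ∧ S.ncard = n})
    {u v : V} (hu : u ∈ C) (hv : v ∈ C) (huv : u ≠ v) :
    ¬ Disjoint (nonNbhd G u) (nonNbhd G v) := by
  intro hdisj
  have hstable : IsC0PStable G {u, v} :=
    Set.pairwise_pair.2 fun _ => ⟨hdisj, hdisj.symm⟩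
  have := hα ⟨{u, v}, Set.pair_subset hu hv, hstable, rfl⟩
  rw [Set.ncard_pair huv] at this
  omega

lemma exists_closedNbhd_subset_compl [Finite V] [LinearOrder V] {C : Set V}
    (hC : G.IsClique C) (hne : C.Nonempty)
    (hint : ∀ v ∈ C, (nonNbhd G v).Nonempty ∧
      ∀ a ∈ Cᶜ, ∀ b ∈ Cᶜ, ∀ c ∈ Cᶜ, a ≤ b → b ≤ c →
        a ∈ nonNbhd G v → c ∈ nonNbhd G v → b ∈ nonNbhd G v)
    (hα : 1 ∈ upperBounds {n | ∃ S : Set V, S ⊆ C ∧ IsC0PStable G S ∧ S.ncard = n}) :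
    ∃ y, closedNbhd G y ⊆ Cᶜ := by
  have : Nonempty C := hne.to_subtype
  let s : C → Set (Cᶜ : Set V) := fun v => Subtype.val ⁻¹' nonNbhd G v
  have hsub (v : C) : nonNbhd G v ⊆ Cᶜ := hC.nonNbhd_subset_compl v.2
  have hconn (v : C) : (s v).OrdConnected :=
    ⟨fun a ha c hc b hb => (hint v v.2).2 a a.2 b b.2 c c.2 hb.1 hb.2 ha hc⟩
  have hsne (v : C) : (s v).Nonempty := by
    obtain ⟨w, hw⟩ := (hint v v.2).1
    exact ⟨⟨w, hsub v hw⟩, hw⟩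
  have hpair : Pairwise fun u v => ¬ Disjoint (s u) (s v) := by
    intro u v huv hdisj
    apply not_disjoint_nonNbhd_of_one_mem_upperBounds hα u.2 v.2 (Subtype.coe_ne_coe.2 huv)
    exact Set.disjoint_left.2 fun w hwu hwv =>
      Set.disjoint_left.1 hdisj (show (⟨w, hsub u hwu⟩ : (Cᶜ : Set V)) ∈ s u from hwu) hwv
  obtain ⟨y, hy⟩ := Set.OrdConnected.nonempty_iInter_of_pairwise_not_disjoint hconn
    (fun _ => Set.toFinite _) hsne hpair
  exact ⟨y, closedNbhd_subset_compl_of_forall_mem_nonNbhd fun v hv =>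
    Set.mem_iInter.1 hy ⟨v, hv⟩⟩

lemma gammaTuple_eq {k n : ℕ} (hex : ∃ D, IsKTupleDomSet G k D ∧ D.ncard = n)
    (hlow : ∀ D, IsKTupleDomSet G k D → n ≤ D.ncard) : gammaTuple G k = n :=
  le_antisymm (Nat.sInf_le hex) (le_csInf ⟨n, hex⟩ fun _ ⟨D, hD, hDn⟩ => hDn ▸ hlow D hD)

variable [Finite V]

lemma IsKTupleDomSet.le_ncard_inter {k : ℕ} {D C : Set V} (hD : IsKTupleDomSet G k D) {y : V}
    (hy : closedNbhd G y ⊆ C) : k ≤ (D ∩ C).ncard :=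
  (hD y).trans (Set.ncard_le_ncard (by rw [Set.inter_comm]; gcongr))

lemma IsKTupleDomSet.two_mul_le_ncard {k : ℕ} {D C : Set V} (hD : IsKTupleDomSet G k D)
    {x y : V} (hx : closedNbhd G x ⊆ C) (hy : closedNbhd G y ⊆ Cᶜ) : 2 * k ≤ D.ncard := by
  rw [← Set.ncard_inter_add_ncard_sdiff_eq_ncard D C]
  have hin : k ≤ (D ∩ C).ncard := hD.le_ncard_inter hx
  have hout : k ≤ (D \ C).ncard := hD.le_ncard_inter hy
  omega

lemma isKTupleDomSet_union_of_isClique {k : ℕ} {C A B : Set V} (hC : G.IsClique C)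
    (hCc : G.IsClique Cᶜ) (hA : A ⊆ C) (hB : B ⊆ Cᶜ) (hkA : k ≤ A.ncard) (hkB : k ≤ B.ncard) :
    IsKTupleDomSet G k (A ∪ B) := by
  intro v
  by_cases hv : v ∈ C
  · exact hkA.trans (Set.ncard_le_ncard fun a ha => ⟨hC.subset_closedNbhd hv (hA ha), .inl ha⟩)
  · exact hkB.trans (Set.ncard_le_ncard fun b hb => ⟨hCc.subset_closedNbhd hv (hB hb), .inr hb⟩)

end Graph

theorem stmt14_general {V : Type*} [Fintype V] [LinearOrder V] (G : SimpleGraph V) (C1 C2 : Set V)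
    (hd12 : Disjoint C1 C2) (hunion : C1 ∪ C2 = Set.univ)
    (hne1 : C1.Nonempty) (hne2 : C2.Nonempty)
    (hcl1 : G.IsClique C1) (hcl2 : G.IsClique C2)
    (hint1 : ∀ v ∈ C1, (nonNbhd G v).Nonempty ∧
      ∀ a ∈ C2, ∀ b ∈ C2, ∀ c ∈ C2, a ≤ b → b ≤ c →
        a ∈ nonNbhd G v → c ∈ nonNbhd G v → b ∈ nonNbhd G v)
    (hint2 : ∀ v ∈ C2, (nonNbhd G v).Nonempty ∧
      ∀ a ∈ C1, ∀ b ∈ C1, ∀ c ∈ C1, a ≤ b → b ≤ c →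
        a ∈ nonNbhd G v → c ∈ nonNbhd G v → b ∈ nonNbhd G v)
    (α1 α2 : ℕ)
    (hα1 : IsGreatest {n | ∃ S : Set V, S ⊆ C1 ∧ IsC0PStable G S ∧ S.ncard = n} α1)
    (hα2 : IsGreatest {n | ∃ S : Set V, S ⊆ C2 ∧ IsC0PStable G S ∧ S.ncard = n} α2)
    (h1 : α1 = 1) (h2 : α2 = 1) (hc1 : 3 ≤ C1.ncard) (hc2 : 3 ≤ C2.ncard) :
    (∃ D : Set V, IsKTupleDomSet G 3 D) ∧ gammaTuple G 3 = 6 := by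
  obtain rfl : C1ᶜ = C2 := IsCompl.compl_eq ⟨hd12, codisjoint_iff.2 hunion⟩
  subst h1 h2
  obtain ⟨A, hA, hA3⟩ := Set.exists_subset_card_eq hc1
  obtain ⟨B, hB, hB3⟩ := Set.exists_subset_card_eq hc2
  have hdom : IsKTupleDomSet G 3 (A ∪ B) :=
    isKTupleDomSet_union_of_isClique hcl1 hcl2 hA hB hA3.ge hB3.ge
  have hcard : (A ∪ B).ncard = 6 := by
    rw [Set.ncard_union_eq (disjoint_compl_right.mono hA hB), hA3, hB3]
  obtain ⟨y, hy⟩ := exists_closedNbhd_subset_compl hcl1 hne1 hint1 hα1.2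
  obtain ⟨x, hx⟩ := exists_closedNbhd_subset_compl hcl2 hne2 (by rwa [compl_compl]) hα2.2
  rw [compl_compl] at hx
  exact ⟨⟨A ∪ B, hdom⟩, gammaTuple_eq ⟨A ∪ B, hdom, hcard⟩ fun D hD => hD.two_mul_le_ncard hx hy⟩

/-- in a C0P-graph with no universal vertices, if `α1 = α2 = 1`, `|C1| ≥ 3` and `|C2| ≥ 3`, then `G` has a `3`-tuple dominating set and `γ×3(G) = 6`. -/
theorem stmt14 {V : Type*} [Fintype V] [LinearOrder V] (G : SimpleGraph V) (C1 C2 : Set V)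
    (hd12 : Disjoint C1 C2) (hunion : C1 ∪ C2 = Set.univ)
    (hne1 : C1.Nonempty) (hne2 : C2.Nonempty)
    (hcl1 : G.IsClique C1) (hcl2 : G.IsClique C2)
    (hnouniv : ∀ v : V, ¬ IsUniversalVertex G v)
    (hint1 : ∀ v ∈ C1, (nonNbhd G v).Nonempty ∧
      ∀ a ∈ C2, ∀ b ∈ C2, ∀ c ∈ C2, a ≤ b → b ≤ c →
        a ∈ nonNbhd G v → c ∈ nonNbhd G v → b ∈ nonNbhd G v)
    (hint2 : ∀ v ∈ C2, (nonNbhd G v).Nonempty ∧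
      ∀ a ∈ C1, ∀ b ∈ C1, ∀ c ∈ C1, a ≤ b → b ≤ c →
        a ∈ nonNbhd G v → c ∈ nonNbhd G v → b ∈ nonNbhd G v)
    (α1 α2 : ℕ)
    (hα1 : IsGreatest {n | ∃ S : Set V, S ⊆ C1 ∧ IsC0PStable G S ∧ S.ncard = n} α1)
    (hα2 : IsGreatest {n | ∃ S : Set V, S ⊆ C2 ∧ IsC0PStable G S ∧ S.ncard = n} α2)
    (h1 : α1 = 1) (h2 : α2 = 1) (hc1 : 3 ≤ C1.ncard) (hc2 : 3 ≤ C2.ncard) :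
    (∃ D : Set V, IsKTupleDomSet G 3 D) ∧ gammaTuple G 3 = 6 :=
  stmt14_general G C1 C2 hd12 hunion hne1 hne2 hcl1 hcl2 hint1 hint2 α1 α2 hα1 hα2 h1 h2 hc1 hc2
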